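/- arXiv:2412.00170 — 7 statements merged into one kernel-verified Lean document; each statement's English description precedes it below -/
import Mathlib

section
/- Let t0 ≠ 0 and let λ be analytic at t0, not identically zero, with λ(t0) = 0, satisfying the Painlevé III' equation on a punctured neighborhood of t0. Then t0 is a simple root of λ, i.e. λ'(t0) ≠ 0. -/
/-- The Painlevé III' equation with parameters `χ0`, `χ∞`, stated at a point `t`. -/
def PIIIp (χ0 χinf : ℂ) (l : ℂ → ℂ) (t : ℂ) : Prop :=
  deriv (deriv l) t =
    (deriv l t) ^ 2 / l t - deriv l t / t - χinf * (l t) ^ 2 / t ^ 2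
      + (l t) ^ 3 / t ^ 2 + χ0 / t - 1 / l t

lemma analyticAt_deriv' {f : ℂ → ℂ} {x : ℂ} (h : AnalyticAt ℂ f x) :
    AnalyticAt ℂ (deriv f) x := by
  rcases mem_nhds_iff.mp h.eventually_analyticAt with ⟨s, hsub, hso, hxs⟩
  exact (AnalyticOnNhd.deriv (fun y hy => hsub hy)) x hxs

theorem stmt1 (t0 χ0 χinf : ℂ) (l : ℂ → ℂ) (ht0 : t0 ≠ 0)
    (hl : AnalyticAt ℂ l t0) (hz : l t0 = 0)
    (hnt : ¬ (∀ᶠ t in nhds t0, l t = 0))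
    (heq : ∀ᶠ t in nhdsWithin t0 {t0}ᶜ, l t ≠ 0 → PIIIp χ0 χinf l t) :
    deriv l t0 ≠ 0 := by
  have hd1 : AnalyticAt ℂ (deriv l) t0 := analyticAt_deriv' hl
  have hd2 : AnalyticAt ℂ (deriv (deriv l)) t0 := analyticAt_deriv' hd1
  have hne : ∀ᶠ t in nhdsWithin t0 {t0}ᶜ, l t ≠ 0 := by
    rcases hl.eventually_eq_zero_or_eventually_ne_zero with h | h
    · exact absurd h hnt
    · exact h
  have heq2 : ∀ᶠ t in nhdsWithin t0 {t0}ᶜ, PIIIp χ0 χinf l t := by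
    filter_upwards [heq, hne] with t h1 h2 using h1 h2
  have htne : ∀ᶠ t in nhdsWithin t0 {t0}ᶜ, t ≠ 0 := by
    apply eventually_nhdsWithin_of_eventually_nhds
    have : {(0:ℂ)}ᶜ ∈ nhds t0 := isOpen_compl_singleton.mem_nhds (by simpa using ht0)
    exact Filter.eventually_of_mem this fun t ht => ht
  set F : ℂ → ℂ := fun t => l t * deriv (deriv l) t with hFdef
  set G : ℂ → ℂ := fun t =>
    (deriv l t) ^ 2 - l t * deriv l t / t - χinf * (l t) ^ 3 / t ^ 2
      + (l t) ^ 4 / t ^ 2 + χ0 * l t / t - 1 with hGdef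
  have hFG : ∀ᶠ t in nhdsWithin t0 {t0}ᶜ, F t = G t := by
    filter_upwards [heq2, hne, htne] with t h1 h2 h3
    simp only [PIIIp] at h1
    simp only [hFdef, hGdef]
    rw [h1, mul_sub, mul_add, mul_add, mul_sub, mul_sub, mul_div_cancel₀ _ h2,
      mul_one_div, div_self h2]
    ring
  have hF : Filter.Tendsto F (nhdsWithin t0 {t0}ᶜ) (nhds 0) := by
    have hc : ContinuousAt F t0 := hl.continuousAt.mul hd2.continuousAt
    have h := hc.tendsto.mono_left (nhdsWithin_le_nhds (s := {t0}ᶜ))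
    simpa [hFdef, hz] using h
  have hG : Filter.Tendsto G (nhdsWithin t0 {t0}ᶜ) (nhds ((deriv l t0) ^ 2 - 1)) := by
    have h1 : ContinuousAt l t0 := hl.continuousAt
    have h2 : ContinuousAt (deriv l) t0 := hd1.continuousAt
    have hc : ContinuousAt G t0 := by
      apply ContinuousAt.sub
      apply ContinuousAt.add
      apply ContinuousAt.add
      apply ContinuousAt.sub
      apply ContinuousAt.sub
      · exact h2.pow 2
      · exact (h1.mul h2).div continuousAt_id ht0
      · exact (continuousAt_const.mul (h1.pow 3)).div (continuousAt_id.pow 2) (pow_ne_zero 2 ht0)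
      · exact (h1.pow 4).div (continuousAt_id.pow 2) (pow_ne_zero 2 ht0)
      · exact (continuousAt_const.mul h1).div continuousAt_id ht0
      · exact continuousAt_const
    have h := hc.tendsto.mono_left (nhdsWithin_le_nhds (s := {t0}ᶜ))
    have hGv : G t0 = (deriv l t0) ^ 2 - 1 := by simp [hGdef, hz]
    rw [hGv] at h
    exact h
  have hkey : (0 : ℂ) = (deriv l t0) ^ 2 - 1 :=
    tendsto_nhds_unique (hF.congr' hFG) hG
  intro h
  rw [h] at hkey
  simp at hkey
end

section
/- Let t0 ≠ 0 and let λ be analytic at t0 with λ(t0) = 0, satisfying the Painlevé III' equation with parameters χ0, χ∞ on a punctured neighborhood of t0, and set e = λ'(t0) (so e² = 1). Then the second derivative satisfies λ''(t0) = (e − χ0)/t0. -/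
/-!
Near the zero `t0`, the equation reads `λ'' = (λ'² - 1)/λ + R` with `R` continuous at `t0` and
`R(t0) = (χ0 - e)/t0`. Since `λ'(t0)² = 1`, the quotient `(λ'² - 1)/λ` is `0/0` at `t0` and tends to
`2 e λ''(t0) / e = 2 λ''(t0)`; comparing limits gives `λ''(t0) = 2 λ''(t0) + (χ0 - e)/t0`.
-/

open Filter Topology

theorem HasDerivAt.tendsto_div_of_eq_zero {𝕜 : Type*} [NontriviallyNormedField 𝕜]
    {f g : 𝕜 → 𝕜} {a b x : 𝕜} (hf : HasDerivAt f a x) (hg : HasDerivAt g b x)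
    (hfx : f x = 0) (hgx : g x = 0) (hb : b ≠ 0) :
    Tendsto (fun t => f t / g t) (𝓝[≠] x) (𝓝 (a / b)) := by
  have hslope := (hasDerivAt_iff_tendsto_slope.mp hf).div (hasDerivAt_iff_tendsto_slope.mp hg) hb
  refine hslope.congr' ?_
  filter_upwards [self_mem_nhdsWithin] with t ht
  have htx : t - x ≠ 0 := sub_ne_zero.mpr ht
  simp only [Pi.div_apply, slope_def_field, hfx, hgx, sub_zero]
  field_simp

theorem PIIIp.deriv_deriv_eq {χ0 χinf t : ℂ} {l : ℂ → ℂ} (h : PIIIp χ0 χinf l t) :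
    deriv (deriv l) t = ((deriv l t) ^ 2 - 1) / l t
      + ((χ0 - deriv l t) / t + (l t) ^ 2 * (l t - χinf) / t ^ 2) := by
  rw [h]
  ring

theorem stmt2 (t0 χ0 χinf e : ℂ) (l : ℂ → ℂ) (ht0 : t0 ≠ 0)
    (hl : AnalyticAt ℂ l t0) (hz : l t0 = 0)
    (heq : ∀ᶠ t in nhdsWithin t0 {t0}ᶜ, l t ≠ 0 → PIIIp χ0 χinf l t)
    (he : deriv l t0 = e) (he2 : e ^ 2 = 1) :
    deriv (deriv l) t0 = (e - χ0) / t0 := by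
  set L := deriv (deriv l) t0
  have he0 : e ≠ 0 := by rintro rfl; norm_num at he2
  have hl' : HasDerivAt l e t0 := he ▸ hl.differentiableAt.hasDerivAt
  have hl'' : HasDerivAt (deriv l) L t0 := hl.deriv.differentiableAt.hasDerivAt
  have hne : ∀ᶠ t in 𝓝[≠] t0, l t ≠ 0 := by simpa only [hz] using hl'.eventually_ne he0
  have hsingular : Tendsto (fun t => ((deriv l t) ^ 2 - 1) / l t) (𝓝[≠] t0) (𝓝 (2 * L)) := by
    have hsq : HasDerivAt (fun t => (deriv l t) ^ 2 - 1) (2 * e * L) t0 := by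
      simpa [he, mul_comm, mul_left_comm] using (hl''.fun_pow 2).sub_const 1
    convert hsq.tendsto_div_of_eq_zero hl' (by simp [he, he2]) hz he0 using 2
    field_simp
  have hregular : Tendsto (fun t => (χ0 - deriv l t) / t + (l t) ^ 2 * (l t - χinf) / t ^ 2)
      (𝓝[≠] t0) (𝓝 ((χ0 - e) / t0)) := by
    have hc : ContinuousAt (fun t => (χ0 - deriv l t) / t + (l t) ^ 2 * (l t - χinf) / t ^ 2) t0 :=
      (hl.deriv.continuousAt.const_sub χ0).div continuousAt_id ht0 |>.add <|
        ((hl.continuousAt.pow 2).mul (hl.continuousAt.sub_const χinf)).div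
          (continuousAt_id.pow 2) (pow_ne_zero 2 ht0)
    simpa [hz, he] using hc.tendsto.mono_left nhdsWithin_le_nhds
  have hL : Tendsto (deriv (deriv l)) (𝓝[≠] t0) (𝓝 L) :=
    hl.deriv.deriv.continuousAt.tendsto.mono_left nhdsWithin_le_nhds
  have hode : deriv (deriv l) =ᶠ[𝓝[≠] t0]
      fun t => ((deriv l t) ^ 2 - 1) / l t
        + ((χ0 - deriv l t) / t + (l t) ^ 2 * (l t - χinf) / t ^ 2) := by
    filter_upwards [heq, hne] with t ht hlt using (ht hlt).deriv_deriv_eq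
  have key : L = 2 * L + (χ0 - e) / t0 :=
    tendsto_nhds_unique (hL.congr' hode) (hsingular.add hregular)
  linear_combination -key
end

section
/- Let λ be a function holomorphic and nonvanishing on an open set U of nonzero complex numbers, satisfying the Painlevé III' equation with parameters (χ0, χ∞). Then the function ν(t) = t/λ(t) satisfies the Painlevé III' equation with the swapped parameters (χ∞, χ0) on U. -/
lemma stmt3_key (T L D χ0 χinf : ℂ) (hT : T ≠ 0) (hL : L ≠ 0) :
  ((0*L + 1*D - (1*D + T*(D^2/L - D/T - χinf*L^2/T^2 + L^3/T^2 + χ0/T - 1/L))) * L^2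
    - (1*L - T*D) * ((2:ℕ)*L^(2-1)*D)) / (L^2)^2
  = ((1*L - T*D)/L^2)^2 / (T/L) - ((1*L-T*D)/L^2)/T - χ0*(T/L)^2/T^2 + (T/L)^3/T^2 + χinf/T - 1/(T/L) := by
  have h1 : L * T * T^2 * T^2 * T ≠ 0 := by
    simp [hT, hL, pow_eq_zero_iff]
  have h2 : (L ^ 2) ^ 2 * T * (L ^ 2 * T) * (L ^ 2 * T ^ 2) ≠ 0 := by
    simp [hT, hL, pow_eq_zero_iff]
  have h3 : L ^ 3 * T ^ 2 * T * T ≠ 0 := by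
    simp [hT, hL, pow_eq_zero_iff]
  field_simp
  have h4 : (L ^ 2) ^ 2 * T * (L ^ 2 * T) * (L ^ 2 * T ^ 2) * (L ^ 3 * T ^ 2) * T ≠ 0 := by
    simp [hT, hL, pow_eq_zero_iff]
  field_simp
  ring

theorem stmt3 (χ0 χinf : ℂ) (U : Set ℂ) (hU : IsOpen U) (l : ℂ → ℂ)
    (h0 : ∀ t ∈ U, t ≠ 0) (hhol : DifferentiableOn ℂ l U)
    (hnz : ∀ t ∈ U, l t ≠ 0) (heq : ∀ t ∈ U, PIIIp χ0 χinf l t) :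
    ∀ t ∈ U, PIIIp χinf χ0 (fun s => s / l s) t := by
  intro t ht
  have hne := h0 t ht
  have hlt := hnz t ht
  have hA : AnalyticOnNhd ℂ l U := hhol.analyticOnNhd hU
  have hUnhds : U ∈ nhds t := hU.mem_nhds ht
  have hl : ∀ s ∈ U, HasDerivAt l (deriv l s) s := fun s hs =>
    (hhol.differentiableAt (hU.mem_nhds hs)).hasDerivAt
  have hl' : HasDerivAt (deriv l) (deriv (deriv l) t) t :=
    ((hA.deriv t ht).differentiableAt).hasDerivAt
  have hν : ∀ s ∈ U, HasDerivAt (fun x => x / l x)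
      ((1 * l s - s * deriv l s) / l s ^ 2) s := fun s hs =>
    (hasDerivAt_id s).div (hl s hs) (hnz s hs)
  have hd1 : deriv (fun x => x / l x) t = (1 * l t - t * deriv l t) / l t ^ 2 :=
    (hν t ht).deriv
  have hEq : (deriv fun x => x / l x) =ᶠ[nhds t]
      fun s => (1 * l s - s * deriv l s) / l s ^ 2 := by
    filter_upwards [hUnhds] with s hs using (hν s hs).deriv
  have hg := (((hasDerivAt_const t (1:ℂ)).mul (hl t ht)).sub
      ((hasDerivAt_id t).mul hl')).div ((hl t ht).pow 2) (pow_ne_zero 2 hlt)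
  have hd2 : deriv (deriv fun x => x / l x) t =
      ((0 * l t + 1 * deriv l t - (1 * deriv l t + t * deriv (deriv l) t)) * l t ^ 2
        - (1 * l t - t * deriv l t) * ((2 : ℕ) * l t ^ (2 - 1) * deriv l t)) / (l t ^ 2) ^ 2 :=
    hEq.deriv_eq.trans hg.deriv
  have hP := heq t ht
  unfold PIIIp at hP ⊢
  rw [hP] at hd2
  rw [hd2, hd1]
  have key := stmt3_key t (l t) (deriv l t) χ0 χinf hne hlt
  exact key
end

section
/- Let e be a constant with e² = 1, and let λ be a solution of the Painlevé III' equation, differentiable near t0 ≠ 0, with λ(t0) = 0 and λ'(t0) = −e. Define μ(t) = (2λ(t)²)^{−1}((e χ0 − 1)λ(t) + λ(t)² + (λ'(t) − e)t) on a punctured neighborhood of t0. Then (t − t0)² μ(t) converges to a nonzero limit as t → t0; in particular μ is unbounded on every neighborhood of t0. -/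
/-- The Painlevé III' equation with parameters `χ0`, `χ∞` (real version). -/
def PIIIpR (χ0 χinf : ℝ) (l : ℝ → ℝ) (t : ℝ) : Prop :=
  deriv (deriv l) t =
    (deriv l t) ^ 2 / l t - deriv l t / t - χinf * (l t) ^ 2 / t ^ 2
      + (l t) ^ 3 / t ^ 2 + χ0 / t - 1 / l t

/-- Proposition 1 of the paper: if `λ'(t0) = -e` (i.e. `λ'(t0) ≠ e`) at a root `t0`
of a smooth solution, then `μ(t) = (2λ²)⁻¹((eχ0-1)λ + λ² + (λ'-e)t)` has a second
order pole at `t0`: `(t-t0)²μ(t)` tends to a nonzero limit. -/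
theorem stmt7 (χ0 χinf t0 e : ℝ) (ht0 : t0 ≠ 0) (he : e ^ 2 = 1)
    (l : ℝ → ℝ) (U : Set ℝ) (hU : U ∈ nhds t0) (hsm : ContDiffOn ℝ (⊤ : ℕ∞) l U)
    (hz : l t0 = 0) (hd : deriv l t0 = -e)
    (heq : ∀ t ∈ U, t ≠ t0 → l t ≠ 0 → PIIIpR χ0 χinf l t) :
    ∃ L : ℝ, L ≠ 0 ∧
      Filter.Tendsto
        (fun t => (t - t0) ^ 2 *
          ((2 * (l t) ^ 2)⁻¹ * ((e * χ0 - 1) * l t + (l t) ^ 2 + (deriv l t - e) * t)))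
        (nhdsWithin t0 {t0}ᶜ) (nhds L) := by
  have he0 : e ≠ 0 := by
    intro h; rw [h] at he; norm_num at he
  have hUo : interior U ∈ nhds t0 := interior_mem_nhds.mpr hU
  have hcd : ContDiffOn ℝ (⊤ : ℕ∞) l (interior U) := hsm.mono interior_subset
  have hcat : ContDiffAt ℝ (⊤ : ℕ∞) l t0 := hcd.contDiffAt hUo
  have hdiff : DifferentiableAt ℝ l t0 := hcat.differentiableAt (by simp)
  -- slope tends to -e
  have hslope : Filter.Tendsto (fun t => l t / (t - t0)) (nhdsWithin t0 {t0}ᶜ)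
      (nhds (-e)) := by
    have h1 : HasDerivAt l (-e) t0 := by
      have := hdiff.hasDerivAt; rwa [hd] at this
    have h2 := hasDerivAt_iff_tendsto_slope.mp h1
    refine h2.congr (fun t => ?_)
    simp [slope_def_field, hz, div_eq_div_iff]
  -- continuity of deriv l at t0
  have hcderiv : ContinuousAt (deriv l) t0 := by
    have hco : ContinuousOn (deriv l) (interior U) :=
      hcd.continuousOn_deriv_of_isOpen isOpen_interior (by simp)
    exact hco.continuousAt hUo
  have hcl : ContinuousAt l t0 := hdiff.continuousAt
  -- numerator tends to -2*e*t0
  have hN : Filter.Tendsto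
      (fun t => (e * χ0 - 1) * l t + (l t) ^ 2 + (deriv l t - e) * t)
      (nhds t0) (nhds (-(2 * e * t0))) := by
    have : ContinuousAt
        (fun t => (e * χ0 - 1) * l t + (l t) ^ 2 + (deriv l t - e) * t) t0 := by
      fun_prop
    have h := this.tendsto
    simp only [hz, hd] at h
    convert h using 2
    ring
  -- (2 * (slope)^2)⁻¹ tends to 2⁻¹
  have hG : Filter.Tendsto (fun t => (2 * (l t / (t - t0)) ^ 2)⁻¹)
      (nhdsWithin t0 {t0}ᶜ) (nhds 2⁻¹) := by
    have hc : ContinuousAt (fun x : ℝ => (2 * x ^ 2)⁻¹) (-e) := by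
      apply ContinuousAt.inv₀
      · fun_prop
      · simp [he]
    have := hc.tendsto.comp hslope
    simpa [he, Function.comp_def] using this
  have hmain : Filter.Tendsto
      (fun t => (2 * (l t / (t - t0)) ^ 2)⁻¹ *
        ((e * χ0 - 1) * l t + (l t) ^ 2 + (deriv l t - e) * t))
      (nhdsWithin t0 {t0}ᶜ) (nhds (-(e * t0))) := by
    have := hG.mul (hN.mono_left nhdsWithin_le_nhds)
    convert this using 2
    ring
  refine ⟨-(e * t0), by simp [he0, ht0], ?_⟩
  refine hmain.congr' ?_
  -- eventually l t ≠ 0 and t ≠ t0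
  have hne : ∀ᶠ t in nhdsWithin t0 {t0}ᶜ, l t / (t - t0) ≠ 0 :=
    hslope.eventually_ne (by simpa using he0)
  have htne : ∀ᶠ t in nhdsWithin t0 {t0}ᶜ, t ≠ t0 :=
    eventually_mem_nhdsWithin.mono (fun t ht => ht)
  filter_upwards [hne, htne] with t h1 h2
  have hsub : t - t0 ≠ 0 := sub_ne_zero.mpr h2
  have hl : l t ≠ 0 := by
    intro h; rw [h] at h1; simp at h1
  field_simp
end

section
/- Let t0 ≠ 0 and let f be smooth in a neighborhood of t0. If for all t near t0 one has ∫₀¹ [∂/∂t ((t−t0)⁴ σ³ ∂/∂σ (σ f(t0 + σ(t−t0))))] dσ = 0, then f vanishes identically in a neighborhood of t0. -/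
open intervalIntegral in
theorem stmt10 (t0 : ℝ) (ht0 : t0 ≠ 0) (f : ℝ → ℝ) (ε : ℝ) (hε : 0 < ε)
    (hf : ContDiffOn ℝ (⊤ : ℕ∞) f (Metric.ball t0 ε))
    (h : ∀ t ∈ Metric.ball t0 ε,
      (∫ σ in (0:ℝ)..1,
        deriv (fun t' => (t' - t0) ^ 4 * σ ^ 3 *
          deriv (fun σ' => σ' * f (t0 + σ' * (t' - t0))) σ) t) = 0) :
    ∃ δ > 0, ∀ t ∈ Metric.ball t0 δ, f t = 0 := by
  classical
  have hBopen : IsOpen (Metric.ball t0 ε) := Metric.isOpen_ball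
  have ht0B : t0 ∈ Metric.ball t0 ε := Metric.mem_ball_self hε
  have hf1 : ContDiffOn ℝ (⊤ : ℕ∞) (deriv f) (Metric.ball t0 ε) := hf.deriv_of_isOpen hBopen (by simp)
  have hf2 : ContDiffOn ℝ (⊤ : ℕ∞) (deriv (deriv f)) (Metric.ball t0 ε) :=
    hf1.deriv_of_isOpen hBopen (by simp)
  have hdf : ∀ x ∈ Metric.ball t0 ε, DifferentiableAt ℝ f x := fun x hx =>
    (hf.differentiableOn (by simp)).differentiableAt (hBopen.mem_nhds hx)
  have hdf' : ∀ x ∈ Metric.ball t0 ε, DifferentiableAt ℝ (deriv f) x := fun x hx =>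
    (hf1.differentiableOn (by simp)).differentiableAt (hBopen.mem_nhds hx)
  have hcf : ContinuousOn f (Metric.ball t0 ε) := hf.continuousOn
  have hcf' : ContinuousOn (deriv f) (Metric.ball t0 ε) := hf1.continuousOn
  have hcf'' : ContinuousOn (deriv (deriv f)) (Metric.ball t0 ε) := hf2.continuousOn
  -- membership of τ = t0 + σ (t - t0)
  have hmem : ∀ t ∈ Metric.ball t0 ε, ∀ σ : ℝ, |σ| ≤ 1 → t0 + σ * (t - t0) ∈ Metric.ball t0 ε := by
    intro t ht σ hσ
    rw [Metric.mem_ball, Real.dist_eq] at *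
    have : |t0 + σ * (t - t0) - t0| = |σ| * |t - t0| := by
      rw [add_sub_cancel_left, abs_mul]
    rw [this]
    calc |σ| * |t - t0| ≤ 1 * |t - t0| :=
          mul_le_mul_of_nonneg_right hσ (abs_nonneg _)
      _ = |t - t0| := one_mul _
      _ < ε := ht
  -- the inner derivative
  have hinner : ∀ t' ∈ Metric.ball t0 ε, ∀ σ : ℝ, |σ| ≤ 1 →
      HasDerivAt (fun σ' => σ' * f (t0 + σ' * (t' - t0)))
        (f (t0 + σ * (t' - t0)) + σ * ((t' - t0) * deriv f (t0 + σ * (t' - t0)))) σ := by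
    intro t' ht' σ hσ
    have hτ := hmem t' ht' σ hσ
    have h1 : HasDerivAt (fun σ' : ℝ => t0 + σ' * (t' - t0)) (t' - t0) σ := by
      simpa using ((hasDerivAt_id σ).mul_const (t' - t0)).const_add t0
    have h2 : HasDerivAt (fun σ' => f (t0 + σ' * (t' - t0)))
        (deriv f (t0 + σ * (t' - t0)) * (t' - t0)) σ :=
      (hdf _ hτ).hasDerivAt.comp σ h1
    have h3 := (hasDerivAt_id σ).mul h2
    exact h3.congr_deriv (by simp only [id_eq, one_mul, mul_one] <;> ring)
  -- key identity : for every t in the ball, (t-t0)^3 * (f t + (t-t0) * f' t) = 0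
  have key : ∀ t ∈ Metric.ball t0 ε,
      (t - t0) ^ 3 * (f t + (t - t0) * deriv f t) = 0 := by
    intro t ht
    have habs : ∀ σ ∈ Set.uIcc (0:ℝ) 1, |σ| ≤ 1 := by
      intro σ hσ
      rw [Set.uIcc_of_le (by norm_num : (0:ℝ) ≤ 1)] at hσ
      rw [abs_le]; constructor <;> [linarith [hσ.1]; exact hσ.2]
    -- pointwise value of the outer derivative
    have hDeriv : ∀ σ ∈ Set.uIcc (0:ℝ) 1,
        deriv (fun t' => (t' - t0) ^ 4 * σ ^ 3 *
          deriv (fun σ' => σ' * f (t0 + σ' * (t' - t0))) σ) t =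
        4 * (t - t0) ^ 3 * σ ^ 3 * f (t0 + σ * (t - t0)) +
          6 * (t - t0) ^ 4 * σ ^ 4 * deriv f (t0 + σ * (t - t0)) +
          (t - t0) ^ 5 * σ ^ 5 * deriv (deriv f) (t0 + σ * (t - t0)) := by
      intro σ hσ
      have hσ1 : |σ| ≤ 1 := habs σ hσ
      have heq : (fun t' => (t' - t0) ^ 4 * σ ^ 3 *
            deriv (fun σ' => σ' * f (t0 + σ' * (t' - t0))) σ) =ᶠ[nhds t]
          (fun t' => (t' - t0) ^ 4 * σ ^ 3 *
            (f (t0 + σ * (t' - t0)) + σ * ((t' - t0) * deriv f (t0 + σ * (t' - t0))))) := by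
        filter_upwards [hBopen.mem_nhds ht] with t' ht'
        rw [(hinner t' ht' σ hσ1).deriv]
      rw [heq.deriv_eq]
      have hτσ : t0 + σ * (t - t0) ∈ Metric.ball t0 ε := hmem t ht σ hσ1
      have h1 : HasDerivAt (fun t' : ℝ => t0 + σ * (t' - t0)) σ t := by
        simpa using (((hasDerivAt_id t).sub_const t0).const_mul σ).const_add t0
      have hft : HasDerivAt (fun t' => f (t0 + σ * (t' - t0)))
          (deriv f (t0 + σ * (t - t0)) * σ) t := (hdf _ hτσ).hasDerivAt.comp t h1
      have hf't : HasDerivAt (fun t' => deriv f (t0 + σ * (t' - t0)))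
          (deriv (deriv f) (t0 + σ * (t - t0)) * σ) t := by
        have := (hdf' _ hτσ).hasDerivAt.comp t h1; exact this
      have hpoly : HasDerivAt (fun t' : ℝ => (t' - t0) ^ 4 * σ ^ 3)
          (4 * (t - t0) ^ 3 * σ ^ 3) t := by
        have := (((hasDerivAt_id t).sub_const t0).pow 4).mul_const (σ ^ 3)
        exact this.congr_deriv
          (by simp only [id_eq, one_mul, mul_one, Nat.cast_ofNat, Nat.reduceSub] <;> ring)
      have hin : HasDerivAt (fun t' => f (t0 + σ * (t' - t0)) +
            σ * ((t' - t0) * deriv f (t0 + σ * (t' - t0))))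
          (deriv f (t0 + σ * (t - t0)) * σ +
            σ * (1 * deriv f (t0 + σ * (t - t0)) +
              (t - t0) * (deriv (deriv f) (t0 + σ * (t - t0)) * σ))) t :=
        hft.add ((((hasDerivAt_id t).sub_const t0).mul hf't).const_mul σ)
      have htotal : HasDerivAt (fun t' => (t' - t0) ^ 4 * σ ^ 3 * (f (t0 + σ * (t' - t0)) + σ * ((t' - t0) * deriv f (t0 + σ * (t' - t0))))) _ t := hpoly.mul hin
      rw [htotal.deriv]
      ring
    -- derivative of G in σ
    have hG : ∀ σ ∈ Set.uIcc (0:ℝ) 1,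
        HasDerivAt (fun σ' => (t - t0) ^ 3 * σ' ^ 4 *
            (f (t0 + σ' * (t - t0)) + σ' * (t - t0) * deriv f (t0 + σ' * (t - t0))))
          (4 * (t - t0) ^ 3 * σ ^ 3 * f (t0 + σ * (t - t0)) +
            6 * (t - t0) ^ 4 * σ ^ 4 * deriv f (t0 + σ * (t - t0)) +
            (t - t0) ^ 5 * σ ^ 5 * deriv (deriv f) (t0 + σ * (t - t0))) σ := by
      intro σ hσ
      have hσ1 : |σ| ≤ 1 := habs σ hσ
      have hτσ : t0 + σ * (t - t0) ∈ Metric.ball t0 ε := hmem t ht σ hσ1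
      have h1 : HasDerivAt (fun σ' : ℝ => t0 + σ' * (t - t0)) (t - t0) σ := by
        simpa using ((hasDerivAt_id σ).mul_const (t - t0)).const_add t0
      have hfσ : HasDerivAt (fun σ' => f (t0 + σ' * (t - t0)))
          (deriv f (t0 + σ * (t - t0)) * (t - t0)) σ := (hdf _ hτσ).hasDerivAt.comp σ h1
      have hf'σ : HasDerivAt (fun σ' => deriv f (t0 + σ' * (t - t0)))
          (deriv (deriv f) (t0 + σ * (t - t0)) * (t - t0)) σ := by
        have := (hdf' _ hτσ).hasDerivAt.comp σ h1; exact this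
      have hpow : HasDerivAt (fun σ' : ℝ => (t - t0) ^ 3 * σ' ^ 4)
          ((t - t0) ^ 3 * (4 * σ ^ 3)) σ := by
        have := ((hasDerivAt_pow 4 σ).const_mul ((t - t0) ^ 3))
        exact this.congr_deriv (by norm_num)
      have hin2 : HasDerivAt (fun σ' => f (t0 + σ' * (t - t0)) +
            σ' * (t - t0) * deriv f (t0 + σ' * (t - t0)))
          (deriv f (t0 + σ * (t - t0)) * (t - t0) +
            (1 * (t - t0) * deriv f (t0 + σ * (t - t0)) +
              σ * (t - t0) * (deriv (deriv f) (t0 + σ * (t - t0)) * (t - t0)))) σ :=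
        hfσ.add (((hasDerivAt_id σ).mul_const (t - t0)).mul hf'σ)
      have htotal : HasDerivAt (fun σ' => (t - t0) ^ 3 * σ' ^ 4 * (f (t0 + σ' * (t - t0)) + σ' * (t - t0) * deriv f (t0 + σ' * (t - t0)))) _ σ := hpow.mul hin2
      convert htotal using 1
      ring
    -- continuity of the explicit integrand
    have hτc : Continuous (fun σ : ℝ => t0 + σ * (t - t0)) := by fun_prop
    have hmap : Set.MapsTo (fun σ : ℝ => t0 + σ * (t - t0)) (Set.uIcc 0 1)
        (Metric.ball t0 ε) := fun σ hσ => hmem t ht σ (habs σ hσ)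
    have c1 : ContinuousOn (fun σ : ℝ => f (t0 + σ * (t - t0))) (Set.uIcc 0 1) :=
      hcf.comp hτc.continuousOn hmap
    have c2 : ContinuousOn (fun σ : ℝ => deriv f (t0 + σ * (t - t0))) (Set.uIcc 0 1) :=
      hcf'.comp hτc.continuousOn hmap
    have c3 : ContinuousOn (fun σ : ℝ => deriv (deriv f) (t0 + σ * (t - t0))) (Set.uIcc 0 1) :=
      hcf''.comp hτc.continuousOn hmap
    have hDcont : ContinuousOn (fun σ : ℝ =>
        4 * (t - t0) ^ 3 * σ ^ 3 * f (t0 + σ * (t - t0)) +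
          6 * (t - t0) ^ 4 * σ ^ 4 * deriv f (t0 + σ * (t - t0)) +
          (t - t0) ^ 5 * σ ^ 5 * deriv (deriv f) (t0 + σ * (t - t0))) (Set.uIcc 0 1) := by
      apply ContinuousOn.add
      apply ContinuousOn.add
      · exact (Continuous.continuousOn (by fun_prop)).mul c1
      · exact (Continuous.continuousOn (by fun_prop)).mul c2
      · exact (Continuous.continuousOn (by fun_prop)).mul c3
    have hint : IntervalIntegrable (fun σ : ℝ =>
        4 * (t - t0) ^ 3 * σ ^ 3 * f (t0 + σ * (t - t0)) +
          6 * (t - t0) ^ 4 * σ ^ 4 * deriv f (t0 + σ * (t - t0)) +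
          (t - t0) ^ 5 * σ ^ 5 * deriv (deriv f) (t0 + σ * (t - t0)))
        MeasureTheory.volume 0 1 := hDcont.intervalIntegrable
    have hIeq : (∫ σ in (0:ℝ)..1,
        deriv (fun t' => (t' - t0) ^ 4 * σ ^ 3 *
          deriv (fun σ' => σ' * f (t0 + σ' * (t' - t0))) σ) t) =
        ∫ σ in (0:ℝ)..1,
          (4 * (t - t0) ^ 3 * σ ^ 3 * f (t0 + σ * (t - t0)) +
            6 * (t - t0) ^ 4 * σ ^ 4 * deriv f (t0 + σ * (t - t0)) +
            (t - t0) ^ 5 * σ ^ 5 * deriv (deriv f) (t0 + σ * (t - t0))) :=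
      intervalIntegral.integral_congr hDeriv
    have hFTC := intervalIntegral.integral_eq_sub_of_hasDerivAt hG hint
    have h0 := h t ht
    rw [hIeq, hFTC] at h0
    have e1 : t0 + 1 * (t - t0) = t := by ring
    have e0 : t0 + 0 * (t - t0) = t0 := by ring
    simp only [e1, e0] at h0
    calc (t - t0) ^ 3 * (f t + (t - t0) * deriv f t)
        = (t - t0) ^ 3 * 1 ^ 4 * (f t + 1 * (t - t0) * deriv f t) -
          (t - t0) ^ 3 * 0 ^ 4 * (f t0 + 0 * (t - t0) * deriv f t0) := by ring
      _ = 0 := h0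
  -- for t ≠ t0 we can divide
  have key' : ∀ t ∈ Metric.ball t0 ε, t ≠ t0 → f t + (t - t0) * deriv f t = 0 := by
    intro t ht hne
    have h3 : (t - t0) ^ 3 ≠ 0 := pow_ne_zero _ (sub_ne_zero.mpr hne)
    exact (mul_eq_zero.mp (key t ht)).resolve_left h3
  -- continuity gives the value at t0 as well
  have hφc : ContinuousAt (fun t => f t + (t - t0) * deriv f t) t0 := by
    have : ContinuousOn (fun t => f t + (t - t0) * deriv f t) (Metric.ball t0 ε) :=
      hcf.add (((continuous_id.sub continuous_const).continuousOn).mul hcf')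
    exact this.continuousAt (hBopen.mem_nhds ht0B)
  have hft0 : f t0 = 0 := by
    have h2 : Filter.Tendsto (fun t => f t + (t - t0) * deriv f t) (nhdsWithin t0 {t0}ᶜ)
        (nhds (f t0 + (t0 - t0) * deriv f t0)) := hφc.tendsto.mono_left nhdsWithin_le_nhds
    have heq : (fun t => f t + (t - t0) * deriv f t) =ᶠ[nhdsWithin t0 {t0}ᶜ]
        (fun _ => (0:ℝ)) := by
      filter_upwards [self_mem_nhdsWithin,
        mem_nhdsWithin_of_mem_nhds (hBopen.mem_nhds ht0B)] with t htne htB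
      exact key' t htB htne
    have h3 : Filter.Tendsto (fun t => f t + (t - t0) * deriv f t) (nhdsWithin t0 {t0}ᶜ)
        (nhds 0) := Filter.Tendsto.congr' heq.symm tendsto_const_nhds
    have := tendsto_nhds_unique h2 h3
    simpa using this
  -- derivative zero everywhere on the ball
  have hφ0 : ∀ x ∈ Metric.ball t0 ε, f x + (x - t0) * deriv f x = 0 := by
    intro x hx
    by_cases hne : x = t0
    · subst hne; simpa using hft0
    · exact key' x hx hne
  have hgd : ∀ x ∈ Metric.ball t0 ε, HasDerivAt (fun t => (t - t0) * f t) 0 x := by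
    intro x hx
    have h1 := ((hasDerivAt_id x).sub_const t0).mul (hdf x hx).hasDerivAt
    have h2 : 1 * f x + (x - t0) * deriv f x = 0 := by
      have := hφ0 x hx; linarith
    simp only [id_eq] at h1
    rw [h2] at h1
    exact h1
  have hconst : ∀ x ∈ Metric.ball t0 ε, (x - t0) * f x = 0 := by
    intro x hx
    have hdiff : DifferentiableOn ℝ (fun t => (t - t0) * f t) (Metric.ball t0 ε) :=
      fun y hy => ((hgd y hy).differentiableAt).differentiableWithinAt
    have hzero : ∀ y ∈ Metric.ball t0 ε,
        fderivWithin ℝ (fun t => (t - t0) * f t) (Metric.ball t0 ε) y = 0 := by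
      intro y hy
      have hF : HasFDerivAt (fun t => (t - t0) * f t) (0 : ℝ →L[ℝ] ℝ) y := by
        have h1 := (hgd y hy).hasFDerivAt
        have e : ContinuousLinearMap.toSpanSingleton ℝ (0 : ℝ) = 0 := by
          ext; simp
        rwa [e] at h1
      rw [fderivWithin_of_isOpen hBopen hy, hF.fderiv]
    have := (convex_ball t0 ε).is_const_of_fderivWithin_eq_zero hdiff hzero hx ht0B
    simpa using this
  refine ⟨ε, hε, fun t ht => ?_⟩
  by_cases hne : t = t0
  · subst hne; exact hft0
  · have := hconst t ht
    exact (mul_eq_zero.mp this).resolve_left (sub_ne_zero.mpr hne)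
end

section
/- Let t0 ≠ 0 and let λ be meromorphic at t0 with a pole at t0, solving the Painlevé III' equation with parameters χ0, χ∞ on a punctured neighborhood of t0. Then the pole is simple and its residue r satisfies r² = t0². -/
/-!
Write `λ = g / (t - t0) ^ n` with `g (t0) ≠ 0`. Then `λ'` and `λ''` have the same shape, with
numerators `G₁`, `G₂` analytic at `t0` and `G₁ t0 = -n g t0`, `G₂ t0 = n (n + 1) g t0`.
Multiplying the equation by `(t - t0) ^ (3n)` turns it into an identity between functions
continuous at `t0`; evaluated at `t0` it reads `0 ^ (2n - 2) · n t0² = g t0²`: for `n ≥ 2`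
the term `λ³ / t²` dominates all others, while for `n = 1` it balances `λ'' - λ'² / λ`.
As `g t0 ≠ 0`, this forces `n = 1` and `g t0 ^ 2 = t0 ^ 2`, and `g t0` is the residue.
-/

open Filter Topology

section PoleDerivative

variable {𝕜 : Type*} [NontriviallyNormedField 𝕜] {t0 : 𝕜} {m : ℕ} {F l : 𝕜 → 𝕜}

noncomputable def poleDerivNumerator (t0 : 𝕜) (m : ℕ) (F : 𝕜 → 𝕜) (t : 𝕜) : 𝕜 :=
  deriv F t * (t - t0) - m * F t

@[simp]
theorem poleDerivNumerator_self : poleDerivNumerator t0 m F t0 = -(m * F t0) := by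
  simp [poleDerivNumerator]

variable [CompleteSpace 𝕜]

theorem AnalyticAt.poleDerivNumerator (hF : AnalyticAt 𝕜 F t0) :
    AnalyticAt 𝕜 (poleDerivNumerator t0 m F) t0 := by
  unfold _root_.poleDerivNumerator
  fun_prop

theorem deriv_eventuallyEq_poleDerivNumerator_div (hF : AnalyticAt 𝕜 F t0)
    (hl : l =ᶠ[𝓝[≠] t0] fun t => F t / (t - t0) ^ m) :
    deriv l =ᶠ[𝓝[≠] t0] fun t => poleDerivNumerator t0 m F t / (t - t0) ^ (m + 1) := by
  filter_upwards [hl.nhdsNE_deriv, hF.eventually_analyticAt.filter_mono nhdsWithin_le_nhds,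
    self_mem_nhdsWithin] with t hlt hFt hne
  have hs : t - t0 ≠ 0 := sub_ne_zero.mpr hne
  rw [hlt, (hFt.differentiableAt.hasDerivAt.fun_div
    (((hasDerivAt_id' t).sub_const t0).fun_pow m) (pow_ne_zero _ hs)).deriv, poleDerivNumerator]
  rcases m with _ | k
  · simp [field]
  · field_simp
    push_cast
    ring

end PoleDerivative

theorem piiip_clear_pole {K : Type*} [Field K] {k : ℕ} {s t L D D₂ g G₁ G₂ χ0 χinf : K}
    (hs : s ≠ 0) (hg : g ≠ 0) (hL : L = g / s ^ (k + 1)) (hD : D = G₁ / s ^ (k + 2))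
    (hD₂ : D₂ = G₂ / s ^ (k + 3))
    (hP : D₂ = D ^ 2 / L - D / t - χinf * L ^ 2 / t ^ 2 + L ^ 3 / t ^ 2 + χ0 / t - 1 / L) :
    s ^ (2 * k) * (G₂ - G₁ ^ 2 / g) + s ^ (2 * k + 1) * G₁ / t
      + χinf * s ^ (k + 1) * g ^ 2 / t ^ 2 - χ0 * s ^ (3 * k + 3) / t
      + s ^ (4 * k + 4) / g = g ^ 3 / t ^ 2 := by
  subst hL hD hD₂
  linear_combination (norm := (field_simp; ring)) s ^ (3 * k + 3) * hP

theorem piiip_pole_balance {t0 χ0 χinf : ℂ} (ht0 : t0 ≠ 0) {l g : ℂ → ℂ} {k : ℕ}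
    (hg : AnalyticAt ℂ g t0) (hg0 : g t0 ≠ 0)
    (hpole : l =ᶠ[𝓝[≠] t0] fun t => g t / (t - t0) ^ (k + 1))
    (heq : ∀ᶠ t in 𝓝[≠] t0, PIIIp χ0 χinf l t) :
    0 ^ (2 * k) * ((k + 1) * t0 ^ 2) = g t0 ^ 2 := by
  set G₁ := poleDerivNumerator t0 (k + 1) g
  set G₂ := poleDerivNumerator t0 (k + 2) G₁
  have hG₁ : AnalyticAt ℂ G₁ t0 := hg.poleDerivNumerator
  have hd₁ := deriv_eventuallyEq_poleDerivNumerator_div hg hpole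
  have hd₂ := deriv_eventuallyEq_poleDerivNumerator_div hG₁ hd₁
  have hcleared : (fun t => (t - t0) ^ (2 * k) * (G₂ t - G₁ t ^ 2 / g t)
      + (t - t0) ^ (2 * k + 1) * G₁ t / t + χinf * (t - t0) ^ (k + 1) * g t ^ 2 / t ^ 2
      - χ0 * (t - t0) ^ (3 * k + 3) / t + (t - t0) ^ (4 * k + 4) / g t)
      =ᶠ[𝓝[≠] t0] fun t => g t ^ 3 / t ^ 2 := by
    filter_upwards [hpole, hd₁, hd₂, heq, self_mem_nhdsWithin,
      (hg.continuousAt.eventually_ne hg0).filter_mono nhdsWithin_le_nhds] with t hl h₁ h₂ hP hne hgt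
    exact piiip_clear_pole (sub_ne_zero.2 hne) hgt hl h₁ h₂ hP
  have hgc := hg.continuousAt
  have hG₁c := hG₁.continuousAt
  have hG₂c : ContinuousAt G₂ t0 := hG₁.poleDerivNumerator.continuousAt
  have ht0₂ : t0 ^ 2 ≠ 0 := pow_ne_zero 2 ht0
  have hlim := ((ContinuousAt.eventuallyEq_nhds_iff_eventuallyEq_nhdsNE
    (by fun_prop (disch := assumption)) (by fun_prop (disch := assumption))).1 hcleared).eq_of_nhds
  simp only [sub_self, zero_pow (Nat.succ_ne_zero _), G₂, G₁, poleDerivNumerator_self,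
    Nat.cast_add, Nat.cast_one, Nat.cast_ofNat] at hlim
  field_simp at hlim
  exact mul_left_cancel₀ (pow_ne_zero 2 hg0) (by linear_combination hlim)

/-- Poles of third Painlevé transcendents are simple, with residue `±t0`.
The pole of order `n ≥ 1` at `t0` is encoded by `l = g/(t-t0)^n` near `t0`
with `g` analytic and nonvanishing at `t0`. -/
theorem stmt15 (t0 χ0 χinf : ℂ) (ht0 : t0 ≠ 0) (l g : ℂ → ℂ) (n : ℕ) (hn : 0 < n)
    (hg : AnalyticAt ℂ g t0) (hg0 : g t0 ≠ 0)
    (hpole : ∀ᶠ t in nhdsWithin t0 {t0}ᶜ, l t = g t / (t - t0) ^ n)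
    (heq : ∀ᶠ t in nhdsWithin t0 {t0}ᶜ, PIIIp χ0 χinf l t) :
    n = 1 ∧ ∃ r : ℂ,
      Filter.Tendsto (fun t => (t - t0) * l t) (nhdsWithin t0 {t0}ᶜ) (nhds r) ∧
      r ^ 2 = t0 ^ 2 := by
  obtain ⟨k, rfl⟩ := Nat.exists_eq_add_one_of_ne_zero hn.ne'
  have hlead := piiip_pole_balance ht0 hg hg0 hpole heq
  rcases k with _ | k
  · refine ⟨rfl, g t0, ?_, ?_⟩
    · refine (hg.continuousAt.tendsto.mono_left nhdsWithin_le_nhds).congr' ?_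
      filter_upwards [hpole, self_mem_nhdsWithin] with t hl hne
      rw [hl, zero_add, pow_one]
      field_simp [sub_ne_zero.2 hne]
    · simpa using hlead.symm
  · rw [zero_pow (by omega), zero_mul] at hlead
    exact absurd hlead.symm (pow_ne_zero 2 hg0)
end

section
/- Let t0 ≠ 0 and let λ be meromorphic at t0 with a simple pole at t0 of residue e·t0 (e² = 1), solving the Painlevé III' equation with parameters χ0, χ∞ on a punctured neighborhood of t0. Then the limit of λ(t) − e·t0/(t−t0) as t → t0 equals (e + χ∞)/2. -/
open Filter Topology

section Pole

variable {𝕜 : Type*} [NontriviallyNormedField 𝕜]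

theorem hasDerivAt_div_sub_pow (c a : 𝕜) (n : ℕ) {t : 𝕜} (ht : t ≠ a) :
    HasDerivAt (fun s => c / (s - a) ^ n) (-(n * c) / (t - a) ^ (n + 1)) t := by
  have hta : t - a ≠ 0 := sub_ne_zero.mpr ht
  simp only [div_eq_mul_inv c]
  refine ((((hasDerivAt_id' t).sub_const a).fun_pow n).fun_inv (pow_ne_zero n hta)).const_mul c
    |>.congr_deriv ?_
  rcases n with _ | k
  · simp
  · rw [Nat.add_sub_cancel]; field_simp; ring

theorem deriv_div_sub_pow_add_eventuallyEq {c a : 𝕜} {n : ℕ} {g : 𝕜 → 𝕜}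
    (hg : ∀ᶠ s in 𝓝 a, DifferentiableAt 𝕜 g s) :
    deriv (fun s => c / (s - a) ^ n + g s) =ᶠ[𝓝[≠] a]
      fun s => -(n * c) / (s - a) ^ (n + 1) + deriv g s := by
  filter_upwards [hg.filter_mono nhdsWithin_le_nhds, self_mem_nhdsWithin] with s hgs hsa
  exact ((hasDerivAt_div_sub_pow c a n hsa).add hgs.hasDerivAt).deriv

theorem eventually_div_sub_add_ne_zero {c a : 𝕜} {g : 𝕜 → 𝕜} (hc : c ≠ 0)
    (hg : ContinuousAt g a) : ∀ᶠ s in 𝓝[≠] a, c / (s - a) + g s ≠ 0 := by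
  have hN : ∀ᶠ s in 𝓝 a, c + (s - a) * g s ≠ 0 := by
    refine ContinuousAt.eventually_ne ?_ (by simpa using hc)
    fun_prop
  filter_upwards [hN.filter_mono nhdsWithin_le_nhds, self_mem_nhdsWithin] with s hNs hsa
  rw [div_add' _ _ _ (sub_ne_zero.mpr hsa)]
  exact div_ne_zero (by rwa [mul_comm]) (sub_ne_zero.mpr hsa)

variable [CompleteSpace 𝕜] {l h : 𝕜 → 𝕜} {c a : 𝕜}

theorem deriv_eventuallyEq_of_eventuallyEq_div_sub_add (hh : AnalyticAt 𝕜 h a)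
    (hl : l =ᶠ[𝓝[≠] a] fun s => c / (s - a) + h s) :
    deriv l =ᶠ[𝓝[≠] a] fun s => -c / (s - a) ^ 2 + deriv h s := by
  have hd := deriv_div_sub_pow_add_eventuallyEq (c := c) (n := 1)
    (hh.eventually_analyticAt.mono fun _ hs => hs.differentiableAt)
  simp only [pow_one, Nat.cast_one, one_mul, Nat.reduceAdd] at hd
  exact hl.nhdsNE_deriv.trans hd

theorem deriv_deriv_eventuallyEq_of_eventuallyEq_div_sub_add (hh : AnalyticAt 𝕜 h a)
    (hl : l =ᶠ[𝓝[≠] a] fun s => c / (s - a) + h s) :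
    deriv (deriv l) =ᶠ[𝓝[≠] a] fun s => 2 * c / (s - a) ^ 3 + deriv (deriv h) s := by
  have hd := deriv_div_sub_pow_add_eventuallyEq (c := -c) (n := 2)
    (hh.eventually_analyticAt.mono fun _ hs => hs.deriv.differentiableAt)
  simp only [Nat.cast_ofNat, mul_neg, neg_neg, Nat.reduceAdd] at hd
  exact (deriv_eventuallyEq_of_eventuallyEq_div_sub_add hh hl).nhdsNE_deriv.trans hd

end Pole

section Remainder

-- For `λ = N / u`, Painlevé III' multiplied by `u³ t² N` reads `u * painleveRemainder = 0`
-- modulo `e² = 1`.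
def painleveRemainder (e χ0 χinf t0 t H H1 H2 : ℂ) : ℂ :=
  let u := t - t0
  let N := e * t0 + u * H
  (2 * e * t0 * H + 2 * e * t0 * u * H1 + u ^ 2 * N * H2 + u ^ 3 * (1 - H1 ^ 2)) * t ^ 2
    + (u ^ 2 * H1 - e * t0) * t * N + χinf * N ^ 3 - χ0 * u ^ 2 * t * N
    + (t0 - 2 * e * t0 * H - u * H ^ 2) * (t0 * t + N ^ 2)

variable {e χ0 χinf t0 t H H1 H2 : ℂ}

theorem painleveRemainder_eq_zero (he : e ^ 2 = 1) (ht : t ≠ 0) (htt0 : t ≠ t0)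
    (hl : e * t0 / (t - t0) + H ≠ 0)
    (hE : 2 * (e * t0) / (t - t0) ^ 3 + H2 =
      (-(e * t0) / (t - t0) ^ 2 + H1) ^ 2 / (e * t0 / (t - t0) + H)
        - (-(e * t0) / (t - t0) ^ 2 + H1) / t
        - χinf * (e * t0 / (t - t0) + H) ^ 2 / t ^ 2
        + (e * t0 / (t - t0) + H) ^ 3 / t ^ 2 + χ0 / t - 1 / (e * t0 / (t - t0) + H)) :
    painleveRemainder e χ0 χinf t0 t H H1 H2 = 0 := by
  have hu : t - t0 ≠ 0 := sub_ne_zero.mpr htt0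
  rw [div_add' _ _ _ hu] at hE hl
  have hN : e * t0 + (t - t0) * H ≠ 0 := by simpa [mul_comm H] using (div_ne_zero_iff.mp hl).1
  field_simp at hE
  refine (mul_eq_zero.mp ?_).resolve_left hu
  unfold painleveRemainder
  linear_combination hE + (t * t0 ^ 3 * (1 + 2 * e * H - 2 * H ^ 2)
    - t ^ 2 * t0 ^ 2 * (1 - H ^ 2) + t0 ^ 4 * (e - H) ^ 2) * he

theorem eq_of_painleveRemainder_self_eq_zero (he : e ^ 2 = 1) (ht0 : t0 ≠ 0)
    (hQ : painleveRemainder e χ0 χinf t0 t0 H H1 H2 = 0) : H = (e + χinf) / 2 := by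
  have hQ' : t0 ^ 3 * (e + χinf - 2 * H) = 0 := by
    simp only [painleveRemainder, sub_self] at hQ
    linear_combination e * hQ + t0 ^ 3 * (2 * H - χinf) * (1 + e ^ 2) * he
  have := (mul_eq_zero.mp hQ').resolve_left (pow_ne_zero 3 ht0)
  linear_combination -this / 2

theorem ContinuousAt.painleveRemainder {H H1 H2 : ℂ → ℂ} (hH : ContinuousAt H t0)
    (hH1 : ContinuousAt H1 t0) (hH2 : ContinuousAt H2 t0) :
    ContinuousAt (fun t => painleveRemainder e χ0 χinf t0 t (H t) (H1 t) (H2 t)) t0 := by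
  simp only [_root_.painleveRemainder]
  fun_prop

theorem eventually_painleveRemainder_eq_zero (ht0 : t0 ≠ 0) (he : e ^ 2 = 1) {l h : ℂ → ℂ}
    (hh : AnalyticAt ℂ h t0) (hrep : l =ᶠ[𝓝[≠] t0] fun t => e * t0 / (t - t0) + h t)
    (heq : ∀ᶠ t in 𝓝[≠] t0, l t ≠ 0 → PIIIp χ0 χinf l t) :
    ∀ᶠ t in 𝓝[≠] t0,
      painleveRemainder e χ0 χinf t0 t (h t) (deriv h t) (deriv (deriv h) t) = 0 := by
  have hl0 := eventually_div_sub_add_ne_zero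
    (mul_ne_zero (left_ne_zero_of_mul_eq_one (by rwa [← sq])) ht0) hh.continuousAt
  filter_upwards [hrep, heq, hl0, deriv_eventuallyEq_of_eventuallyEq_div_sub_add hh hrep,
    deriv_deriv_eventuallyEq_of_eventuallyEq_div_sub_add hh hrep, self_mem_nhdsWithin,
    (eventually_ne_nhds ht0).filter_mono nhdsWithin_le_nhds] with t hlt het hl0t hl1t hl2t htt0 ht
  have hE := het (hlt ▸ hl0t)
  rw [PIIIp, hl1t, hl2t, hlt] at hE
  exact painleveRemainder_eq_zero he ht htt0 hl0t hE

end Remainder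

/-- At a simple pole `t0` with residue `e·t0` (`e² = 1`) of a third Painlevé
transcendent, the constant term of the Laurent expansion equals `(e + χ∞)/2`. -/
theorem stmt16 (t0 χ0 χinf e : ℂ) (ht0 : t0 ≠ 0) (he : e ^ 2 = 1)
    (l h : ℂ → ℂ) (hh : AnalyticAt ℂ h t0)
    (hrep : ∀ᶠ t in nhdsWithin t0 {t0}ᶜ, l t = e * t0 / (t - t0) + h t)
    (heq : ∀ᶠ t in nhdsWithin t0 {t0}ᶜ, l t ≠ 0 → PIIIp χ0 χinf l t) :
    Filter.Tendsto (fun t => l t - e * t0 / (t - t0)) (nhdsWithin t0 {t0}ᶜ)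
      (nhds ((e + χinf) / 2)) := by
  have hQcont := hh.continuousAt.painleveRemainder (e := e) (χ0 := χ0) (χinf := χinf)
    hh.deriv.continuousAt hh.deriv.deriv.continuousAt
  have hQ := eventually_painleveRemainder_eq_zero ht0 he hh hrep heq
  have hval := eq_of_painleveRemainder_self_eq_zero he ht0
    ((hQcont.eventuallyEq_nhds_iff_eventuallyEq_nhdsNE continuousAt_const).mp hQ).eq_of_nhds
  refine (hval ▸ hh.continuousAt.tendsto.mono_left nhdsWithin_le_nhds).congr' ?_
  filter_upwards [hrep] with t ht
  rw [ht, add_sub_cancel_left]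
end
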